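/- Exactness of the drift-bias correction with the true drift: if σ(x)² = Σ_{k=1}^{K} d_k·f_k(x) for all x, then for every N ∈ ℕ and kernel index j the bias-corrected response Q_j^corr := Σ_{n=0}^{N−1} K_j(X_n)·(ΔX_n)² − Δt²·Σ_{n=0}^{N−1} K_j(X_n)·b(X_n)² satisfies E[Q_j^corr] = Σ_{k=1}^{K} d_k·E[A_{jk}], where A_{jk} := Δt·Σ_{n=0}^{N−1} K_j(X_n)·f_k(X_n). -/

import Mathlib

open MeasureTheory ProbabilityTheory Filter

section DbcAux

open Real Set
open scoped NNReal ENNReal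

/-! ### Gaussian moment computations -/

private lemma dbc_pdf (x : ℝ) :
    gaussianPDFReal 0 1 x = (Real.sqrt (2 * π))⁻¹ * Real.exp (-(1/2) * x ^ 2) := by
  simp only [gaussianPDFReal, NNReal.coe_one, mul_one, sub_zero]
  ring_nf

private lemma dbc_integral_gauss (g : ℝ → ℝ) :
    ∫ x, g x ∂(gaussianReal 0 1) = ∫ x, gaussianPDFReal 0 1 x * g x := by
  rw [gaussianReal_of_var_ne_zero 0 one_ne_zero]
  have h := integral_withDensity_eq_integral_smul (μ := volume)
    (f := fun x => (gaussianPDFReal 0 1 x).toNNReal)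
    ((measurable_gaussianPDFReal 0 1).real_toNNReal) g
  rw [show (gaussianPDF 0 1) = (fun x => ((gaussianPDFReal 0 1 x).toNNReal : ℝ≥0∞)) from rfl, h]
  congr 1 with x
  rw [NNReal.smul_def, smul_eq_mul, Real.coe_toNNReal _ (gaussianPDFReal_nonneg 0 1 x)]

private lemma dbc_integrable_gauss_iff (g : ℝ → ℝ) :
    Integrable g (gaussianReal 0 1) ↔
      Integrable (fun x => gaussianPDFReal 0 1 x * g x) := by
  rw [gaussianReal_of_var_ne_zero 0 one_ne_zero]
  rw [show (gaussianPDF 0 1) = (fun x => ((gaussianPDFReal 0 1 x).toNNReal : ℝ≥0∞)) from rfl]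
  rw [integrable_withDensity_iff_integrable_smul ((measurable_gaussianPDFReal 0 1).real_toNNReal)]
  apply integrable_congr
  filter_upwards with x
  rw [NNReal.smul_def, smul_eq_mul, Real.coe_toNNReal _ (gaussianPDFReal_nonneg 0 1 x)]

private lemma dbc_int_sq_exp : Integrable (fun x : ℝ => x ^ 2 * Real.exp (-(1/2) * x ^ 2)) := by
  have h := integrable_rpow_mul_exp_neg_mul_sq (b := 1/2) (by norm_num) (s := 2) (by norm_num)
  apply h.congr
  filter_upwards with x
  rw [show ((2:ℝ) = ((2:ℕ):ℝ)) by norm_num, Real.rpow_natCast]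

private lemma dbc_int_mul_exp : Integrable (fun x : ℝ => x * Real.exp (-(1/2) * x ^ 2)) :=
  integrable_mul_exp_neg_mul_sq (by norm_num)

private lemma dbc_int_exp : Integrable (fun x : ℝ => Real.exp (-(1/2) * x ^ 2)) :=
  integrable_exp_neg_mul_sq (by norm_num)

private lemma dbc_integral_odd : ∫ x : ℝ, x * Real.exp (-(1/2) * x ^ 2) = 0 := by
  have hemb : MeasurableEmbedding (fun x : ℝ => -x) :=
    (Homeomorph.neg ℝ).measurableEmbedding
  have h1 : ∫ x : ℝ, x * Real.exp (-(1/2) * x ^ 2)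
      = ∫ x : ℝ, (-x) * Real.exp (-(1/2) * (-x) ^ 2) := by
    conv_lhs => rw [← Measure.map_neg_eq_self (volume : Measure ℝ)]
    exact hemb.integral_map _
  have h2 : ∫ x : ℝ, (-x) * Real.exp (-(1/2) * (-x) ^ 2)
      = - ∫ x : ℝ, x * Real.exp (-(1/2) * x ^ 2) := by
    rw [← integral_neg]
    congr 1 with x
    ring_nf
  linarith [h1, h2]

private lemma dbc_tendsto :
    Tendsto (fun x : ℝ => x * Real.exp (-(1/2) * x ^ 2)) atTop (nhds 0) := by
  have ho := rpow_mul_exp_neg_mul_sq_isLittleO_exp_neg (b := 1/2) (by norm_num) 1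
  simp only [Real.rpow_one] at ho
  apply ho.trans_tendsto
  have h1 : Tendsto (fun x : ℝ => -(1/2) * x) atTop atBot :=
    Tendsto.const_mul_atTop_of_neg (by norm_num) tendsto_id
  exact Real.tendsto_exp_atBot.comp h1

private lemma dbc_ftc :
    ∫ x in Ioi (0:ℝ),
      (x ^ 2 * Real.exp (-(1/2) * x ^ 2) - Real.exp (-(1/2) * x ^ 2)) = 0 := by
  have hderiv : ∀ x ∈ Ici (0:ℝ), HasDerivAt (fun y : ℝ => -(y * Real.exp (-(1/2) * y ^ 2)))
      (x ^ 2 * Real.exp (-(1/2) * x ^ 2) - Real.exp (-(1/2) * x ^ 2)) x := by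
    intro x _
    have h1 : HasDerivAt (fun y : ℝ => -(1/2) * y ^ 2) (-(1/2) * (2 * x)) x := by
      simpa using ((hasDerivAt_pow 2 x).const_mul (-(1/2:ℝ)))
    have h2 : HasDerivAt (fun y : ℝ => Real.exp (-(1/2) * y ^ 2))
        (Real.exp (-(1/2) * x ^ 2) * (-(1/2) * (2 * x))) x := h1.exp
    have h3 : HasDerivAt (fun y : ℝ => -(y * Real.exp (-(1/2) * y ^ 2)))
        (-(1 * Real.exp (-(1/2) * x ^ 2) + x * (Real.exp (-(1/2) * x ^ 2) * (-(1/2) * (2 * x))))) x :=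
      ((hasDerivAt_id' x).mul h2).neg
    convert h3 using 1
    ring
  have hint : IntegrableOn (fun x : ℝ =>
      x ^ 2 * Real.exp (-(1/2) * x ^ 2) - Real.exp (-(1/2) * x ^ 2)) (Ioi 0) :=
    (dbc_int_sq_exp.sub dbc_int_exp).integrableOn
  have htend : Tendsto (fun y : ℝ => -(y * Real.exp (-(1/2) * y ^ 2))) atTop (nhds 0) := by
    simpa using dbc_tendsto.neg
  have := integral_Ioi_of_hasDerivAt_of_tendsto' hderiv hint htend
  simpa using this

private lemma dbc_integral_sq_exp :
    ∫ x : ℝ, x ^ 2 * Real.exp (-(1/2) * x ^ 2) = ∫ x : ℝ, Real.exp (-(1/2) * x ^ 2) := by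
  have hIoi : ∫ x in Ioi (0:ℝ), x ^ 2 * Real.exp (-(1/2) * x ^ 2)
      = ∫ x in Ioi (0:ℝ), Real.exp (-(1/2) * x ^ 2) := by
    have h := integral_sub (μ := volume.restrict (Ioi 0))
      (dbc_int_sq_exp.integrableOn (s := Ioi 0))
      (dbc_int_exp.integrableOn (s := Ioi 0))
    rw [dbc_ftc] at h
    linarith [h]
  have h1 : ∫ x : ℝ, x ^ 2 * Real.exp (-(1/2) * x ^ 2)
      = 2 * ∫ x in Ioi (0:ℝ), x ^ 2 * Real.exp (-(1/2) * x ^ 2) := by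
    rw [← integral_comp_abs (f := fun x => x ^ 2 * Real.exp (-(1/2) * x ^ 2))]
    simp [sq_abs]
  have h2 : ∫ x : ℝ, Real.exp (-(1/2) * x ^ 2)
      = 2 * ∫ x in Ioi (0:ℝ), Real.exp (-(1/2) * x ^ 2) := by
    rw [← integral_comp_abs (f := fun x => Real.exp (-(1/2) * x ^ 2))]
    simp [sq_abs]
  rw [h1, h2, hIoi]

private lemma dbc_sqrt_two_pi_pos : (0:ℝ) < Real.sqrt (2 * π) :=
  Real.sqrt_pos.mpr (by positivity)

private lemma dbc_integral_exp_eq : ∫ x : ℝ, Real.exp (-(1/2) * x ^ 2) = Real.sqrt (2 * π) := by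
  have h := integral_gaussian (1/2 : ℝ)
  rw [h]
  congr 1
  rw [div_div_eq_mul_div, div_one]
  ring

private lemma dbc_gauss_mean : ∫ x, x ∂(gaussianReal 0 1) = 0 := by
  rw [dbc_integral_gauss]
  have : ∀ x : ℝ, gaussianPDFReal 0 1 x * x
      = (Real.sqrt (2 * π))⁻¹ * (x * Real.exp (-(1/2) * x ^ 2)) := by
    intro x; rw [dbc_pdf]; ring
  simp_rw [this]
  rw [integral_const_mul, dbc_integral_odd, mul_zero]

private lemma dbc_gauss_sq : ∫ x, x ^ 2 ∂(gaussianReal 0 1) = 1 := by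
  rw [dbc_integral_gauss]
  have : ∀ x : ℝ, gaussianPDFReal 0 1 x * x ^ 2
      = (Real.sqrt (2 * π))⁻¹ * (x ^ 2 * Real.exp (-(1/2) * x ^ 2)) := by
    intro x; rw [dbc_pdf]; ring
  simp_rw [this]
  rw [integral_const_mul, dbc_integral_sq_exp, dbc_integral_exp_eq,
    inv_mul_cancel₀ dbc_sqrt_two_pi_pos.ne']

private lemma dbc_gauss_int_id : Integrable (fun x : ℝ => x) (gaussianReal 0 1) := by
  rw [dbc_integrable_gauss_iff]
  apply (dbc_int_mul_exp.const_mul ((Real.sqrt (2 * π))⁻¹)).congr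
  filter_upwards with x
  rw [dbc_pdf]; ring

private lemma dbc_gauss_int_sq : Integrable (fun x : ℝ => x ^ 2) (gaussianReal 0 1) := by
  rw [dbc_integrable_gauss_iff]
  apply (dbc_int_sq_exp.const_mul ((Real.sqrt (2 * π))⁻¹)).congr
  filter_upwards with x
  rw [dbc_pdf]; ring

/-! ### Bounds -/

private lemma dbc_bdd_mul {g h : ℝ → ℝ} {C D : ℝ} (hg : ∀ x, |g x| ≤ C) (hh : ∀ x, |h x| ≤ D) :
    ∀ x, |g x * h x| ≤ C * D := fun x => by
  rw [abs_mul]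
  exact mul_le_mul (hg x) (hh x) (abs_nonneg _) ((abs_nonneg _).trans (hg x))

end DbcAux

/-- Exactness of the drift-bias correction with the true drift: if
`σ² = Σ_k d_k f_k`, then the bias-corrected response
`Q_j^corr := Σ_{n<N} K_j(X_n) (ΔX_n)² − Δt² Σ_{n<N} K_j(X_n) b(X_n)²`
satisfies `E[Q_j^corr] = Σ_k d_k E[A_{jk}]`. -/
theorem drift_bias_correction_exact
    {Ω : Type*} [mΩ : MeasurableSpace Ω] (P : Measure Ω) [IsProbabilityMeasure P]
    (ℱ : Filtration ℕ mΩ)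
    (Δt : ℝ) (hΔt : 0 < Δt)
    (b σ : ℝ → ℝ) (hb_meas : Measurable b) (hσ_meas : Measurable σ)
    (hb_bdd : ∃ C, ∀ x, |b x| ≤ C) (hσ_bdd : ∃ C, ∀ x, |σ x| ≤ C)
    (X : ℕ → Ω → ℝ) (hX_adapted : Adapted ℱ X)
    (ξ : ℕ → Ω → ℝ) (hξ_meas : ∀ n, Measurable (ξ n))
    (hξ_law : ∀ n, Measure.map (ξ n) P = gaussianReal 0 1)
    (hξ_adapted : ∀ n, Measurable[ℱ (n + 1)] (ξ n))
    (hξ_indep : ∀ n, Indep (MeasurableSpace.comap (ξ n) inferInstance) (ℱ n) P)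
    (ΔX : ℕ → Ω → ℝ)
    (hΔX : ∀ n ω, ΔX n ω = b (X n ω) * Δt + σ (X n ω) * Real.sqrt Δt * ξ n ω)
    (hX_rec : ∀ n ω, X (n + 1) ω = X n ω + ΔX n ω)
    {M K : ℕ} (Kf : Fin M → ℝ → ℝ) (f : Fin K → ℝ → ℝ)
    (hKf_meas : ∀ j, Measurable (Kf j)) (hKf_bdd : ∀ j, ∃ C, ∀ x, |Kf j x| ≤ C)
    (hf_meas : ∀ k, Measurable (f k)) (hf_bdd : ∀ k, ∃ C, ∀ x, |f k x| ≤ C)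
    (d : Fin K → ℝ)
    (hlib : ∀ x, σ x ^ 2 = ∑ k, d k * f k x)
    (N : ℕ) (j : Fin M) :
    ∫ ω, ((∑ n ∈ Finset.range N, Kf j (X n ω) * (ΔX n ω) ^ 2)
          - Δt ^ 2 * ∑ n ∈ Finset.range N, Kf j (X n ω) * b (X n ω) ^ 2) ∂P =
      ∑ k, d k * ∫ ω, (Δt * ∑ n ∈ Finset.range N, Kf j (X n ω) * f k (X n ω)) ∂P := by
  classical
  obtain ⟨CK, hCK⟩ := hKf_bdd j
  obtain ⟨Cb, hCb⟩ := hb_bdd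
  obtain ⟨Cσ, hCσ⟩ := hσ_bdd
  -- measurability of X n
  have hXm : ∀ n, Measurable (X n) := fun n =>
    (hX_adapted n).mono (ℱ.le n) le_rfl
  -- integrability of bounded functions of X n
  have hbint : ∀ (g : ℝ → ℝ), Measurable g → ∀ C : ℝ, (∀ x, |g x| ≤ C) →
      ∀ n, Integrable (fun ω => g (X n ω)) P := by
    intro g hg C hC n
    refine (integrable_const C).mono' ((hg.comp (hXm n)).aestronglyMeasurable) ?_
    filter_upwards with ω
    simpa [Real.norm_eq_abs] using hC (X n ω)
  -- moments of ξ
  have hξ_int : ∀ n, Integrable (ξ n) P := by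
    intro n
    have h : Integrable (fun x : ℝ => x) (Measure.map (ξ n) P) := by
      rw [hξ_law n]; exact dbc_gauss_int_id
    exact (integrable_map_measure aestronglyMeasurable_id
      (hξ_meas n).aemeasurable).1 h
  have hξ2_int : ∀ n, Integrable (fun ω => ξ n ω ^ 2) P := by
    intro n
    have h : Integrable (fun x : ℝ => x ^ 2) (Measure.map (ξ n) P) := by
      rw [hξ_law n]; exact dbc_gauss_int_sq
    exact (integrable_map_measure
      (measurable_id.pow_const 2).aestronglyMeasurable
      (hξ_meas n).aemeasurable).1 h
  have hEξ : ∀ n, ∫ ω, ξ n ω ∂P = 0 := by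
    intro n
    have h := integral_map (hξ_meas n).aemeasurable
      (aestronglyMeasurable_id (μ := Measure.map (ξ n) P) (α := ℝ))
    rw [hξ_law n] at h
    simpa [dbc_gauss_mean] using h.symm
  have hEξ2 : ∀ n, ∫ ω, ξ n ω ^ 2 ∂P = 1 := by
    intro n
    have h := integral_map (μ := P) (f := fun x : ℝ => x ^ 2) (hξ_meas n).aemeasurable
      (measurable_id.pow_const 2).aestronglyMeasurable
    rw [hξ_law n] at h
    simpa [dbc_gauss_sq] using h.symm
  -- independence of g (X n) and φ (ξ n)
  have hIndep : ∀ n (g : ℝ → ℝ), Measurable g →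
      IndepFun (fun ω => g (X n ω)) (ξ n) P := by
    intro n g hg
    rw [indepFun_iff_measure_inter_preimage_eq_mul]
    intro s t hs ht
    have hmeas : MeasurableSet[ℱ n] ((fun ω => g (X n ω)) ⁻¹' s) :=
      (hg.comp (hX_adapted n)) hs
    have h := (Indep_iff _ _ P).1 (hξ_indep n) (ξ n ⁻¹' t) ((fun ω => g (X n ω)) ⁻¹' s)
      ⟨t, ht, rfl⟩ hmeas
    rw [Set.inter_comm] at h
    rw [h, mul_comm]
  have hIndep2 : ∀ n (g : ℝ → ℝ), Measurable g →
      IndepFun (fun ω => g (X n ω)) (fun ω => ξ n ω ^ 2) P := by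
    intro n g hg
    have h := (hIndep n g hg).comp measurable_id (measurable_id.pow_const 2)
    exact h
  -- the two auxiliary library functions
  set g1 : ℝ → ℝ := fun x => 2 * Δt * Real.sqrt Δt * (Kf j x * (b x * σ x)) with hg1
  set g2 : ℝ → ℝ := fun x => Δt * (Kf j x * σ x ^ 2) with hg2
  have hg1m : Measurable g1 :=
    (((hKf_meas j).mul (hb_meas.mul hσ_meas)).const_mul _)
  have hg2m : Measurable g2 :=
    (((hKf_meas j).mul (hσ_meas.pow_const 2)).const_mul _)
  have hσ2b : ∀ x, |σ x ^ 2| ≤ Cσ * Cσ := by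
    intro x
    rw [pow_two, abs_mul]
    exact mul_le_mul (hCσ x) (hCσ x) (abs_nonneg _) ((abs_nonneg _).trans (hCσ x))
  have hg1b : ∀ x, |g1 x| ≤ |2 * Δt * Real.sqrt Δt| * (CK * (Cb * Cσ)) := by
    intro x
    show |2 * Δt * Real.sqrt Δt * (Kf j x * (b x * σ x))| ≤ _
    rw [abs_mul]
    exact mul_le_mul le_rfl (dbc_bdd_mul hCK (dbc_bdd_mul hCb hCσ) x)
      (abs_nonneg _) (abs_nonneg _)
  have hg2b : ∀ x, |g2 x| ≤ |Δt| * (CK * (Cσ * Cσ)) := by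
    intro x
    show |Δt * (Kf j x * σ x ^ 2)| ≤ _
    rw [abs_mul]
    exact mul_le_mul le_rfl (dbc_bdd_mul hCK hσ2b x) (abs_nonneg _) (abs_nonneg _)
  have hg1int : ∀ n, Integrable (fun ω => g1 (X n ω)) P :=
    hbint g1 hg1m _ hg1b
  have hg2int : ∀ n, Integrable (fun ω => g2 (X n ω)) P :=
    hbint g2 hg2m _ hg2b
  -- pointwise identity
  have hptAll : ∀ n ω, Kf j (X n ω) * (ΔX n ω) ^ 2 - Δt ^ 2 * (Kf j (X n ω) * b (X n ω) ^ 2)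
      = g1 (X n ω) * ξ n ω + g2 (X n ω) * ξ n ω ^ 2 := by
    intro n ω
    rw [hΔX n ω]
    show Kf j (X n ω) * (b (X n ω) * Δt + σ (X n ω) * Real.sqrt Δt * ξ n ω) ^ 2
        - Δt ^ 2 * (Kf j (X n ω) * b (X n ω) ^ 2)
      = 2 * Δt * Real.sqrt Δt * (Kf j (X n ω) * (b (X n ω) * σ (X n ω))) * ξ n ω
        + Δt * (Kf j (X n ω) * σ (X n ω) ^ 2) * ξ n ω ^ 2
    have hs : Real.sqrt Δt * Real.sqrt Δt = Δt := Real.mul_self_sqrt hΔt.le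
    linear_combination (Kf j (X n ω) * σ (X n ω) ^ 2 * ξ n ω ^ 2) * hs
  -- per-summand expectation
  have hterm : ∀ n, ∫ ω, (Kf j (X n ω) * (ΔX n ω) ^ 2
        - Δt ^ 2 * (Kf j (X n ω) * b (X n ω) ^ 2)) ∂P
      = ∫ ω, g2 (X n ω) ∂P := by
    intro n
    have hpt := hptAll n
    have hi1 : Integrable (fun ω => g1 (X n ω) * ξ n ω) P :=
      (hIndep n g1 hg1m).integrable_mul (hg1int n) (hξ_int n)
    have hi2 : Integrable (fun ω => g2 (X n ω) * ξ n ω ^ 2) P :=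
      (hIndep2 n g2 hg2m).integrable_mul (hg2int n) (hξ2_int n)
    calc ∫ ω, (Kf j (X n ω) * (ΔX n ω) ^ 2
          - Δt ^ 2 * (Kf j (X n ω) * b (X n ω) ^ 2)) ∂P
        = ∫ ω, (g1 (X n ω) * ξ n ω + g2 (X n ω) * ξ n ω ^ 2) ∂P := by
          apply integral_congr_ae
          filter_upwards with ω
          exact hpt ω
      _ = (∫ ω, g1 (X n ω) * ξ n ω ∂P) + ∫ ω, g2 (X n ω) * ξ n ω ^ 2 ∂P :=
          integral_add hi1 hi2
      _ = (∫ ω, g1 (X n ω) ∂P) * (∫ ω, ξ n ω ∂P)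
          + (∫ ω, g2 (X n ω) ∂P) * (∫ ω, ξ n ω ^ 2 ∂P) := by
          have e1 := (hIndep n g1 hg1m).integral_fun_mul_eq_mul_integral (hg1int n).aestronglyMeasurable (hξ_int n).aestronglyMeasurable
          have e2 := (hIndep2 n g2 hg2m).integral_fun_mul_eq_mul_integral (hg2int n).aestronglyMeasurable (hξ2_int n).aestronglyMeasurable
          exact congrArg₂ (· + ·) e1 e2
      _ = ∫ ω, g2 (X n ω) ∂P := by
          rw [hEξ n, hEξ2 n]; ring
  -- decompose g2 expectation along the library
  have hKfk_int : ∀ (k : Fin K) n, Integrable (fun ω => Kf j (X n ω) * f k (X n ω)) P := by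
    intro k n
    obtain ⟨Cf, hCf⟩ := hf_bdd k
    exact hbint (fun x => Kf j x * f k x) ((hKf_meas j).mul (hf_meas k)) _
      (dbc_bdd_mul hCK hCf) n
  have hg2exp : ∀ n, ∫ ω, g2 (X n ω) ∂P
      = ∑ k, d k * (Δt * ∫ ω, Kf j (X n ω) * f k (X n ω) ∂P) := by
    intro n
    have hpt : ∀ ω, g2 (X n ω) = ∑ k, d k * (Δt * (Kf j (X n ω) * f k (X n ω))) := by
      intro ω
      rw [hg2]
      simp only []
      rw [hlib (X n ω), Finset.mul_sum, Finset.mul_sum]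
      apply Finset.sum_congr rfl
      intro k _
      ring
    rw [integral_congr_ae (Filter.Eventually.of_forall hpt)]
    rw [integral_finset_sum]
    · apply Finset.sum_congr rfl
      intro k _
      rw [integral_const_mul, integral_const_mul]
    · intro k _
      exact (((hKfk_int k n).const_mul Δt).const_mul (d k))
  -- integrability of each term of the LHS
  have hterm_int : ∀ n, Integrable (fun ω => Kf j (X n ω) * (ΔX n ω) ^ 2
      - Δt ^ 2 * (Kf j (X n ω) * b (X n ω) ^ 2)) P := by
    intro n
    have hpt := hptAll n
    have hi1 : Integrable (fun ω => g1 (X n ω) * ξ n ω) P :=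
      (hIndep n g1 hg1m).integrable_mul (hg1int n) (hξ_int n)
    have hi2 : Integrable (fun ω => g2 (X n ω) * ξ n ω ^ 2) P :=
      (hIndep2 n g2 hg2m).integrable_mul (hg2int n) (hξ2_int n)
    exact (hi1.add hi2).congr (Filter.Eventually.of_forall fun ω => (hpt ω).symm)
  -- Put the LHS together
  have hLHS : ∫ ω, ((∑ n ∈ Finset.range N, Kf j (X n ω) * (ΔX n ω) ^ 2)
          - Δt ^ 2 * ∑ n ∈ Finset.range N, Kf j (X n ω) * b (X n ω) ^ 2) ∂P
      = ∑ n ∈ Finset.range N, ∑ k, d k * (Δt * ∫ ω, Kf j (X n ω) * f k (X n ω) ∂P) := by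
    have hpt : ∀ ω, (∑ n ∈ Finset.range N, Kf j (X n ω) * (ΔX n ω) ^ 2)
          - Δt ^ 2 * ∑ n ∈ Finset.range N, Kf j (X n ω) * b (X n ω) ^ 2
        = ∑ n ∈ Finset.range N, (Kf j (X n ω) * (ΔX n ω) ^ 2
          - Δt ^ 2 * (Kf j (X n ω) * b (X n ω) ^ 2)) := by
      intro ω
      rw [Finset.mul_sum, ← Finset.sum_sub_distrib]
    rw [integral_congr_ae (Filter.Eventually.of_forall hpt),
      integral_finset_sum _ (fun n _ => hterm_int n)]
    apply Finset.sum_congr rfl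
    intro n _
    rw [hterm n, hg2exp n]
  -- Put the RHS together
  have hRHS : ∑ k, d k * ∫ ω, (Δt * ∑ n ∈ Finset.range N, Kf j (X n ω) * f k (X n ω)) ∂P
      = ∑ n ∈ Finset.range N, ∑ k, d k * (Δt * ∫ ω, Kf j (X n ω) * f k (X n ω) ∂P) := by
    rw [Finset.sum_comm]
    apply Finset.sum_congr rfl
    intro k _
    rw [integral_const_mul, integral_finset_sum _ (fun n _ => hKfk_int k n),
      Finset.mul_sum, Finset.mul_sum]
  rw [hLHS, hRHS]
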